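/- Let G be an ancestral graph on vertex set [p] and 𝓘 a multiset of intervention targets. Then 𝓘 does not doubly-intervene on any selection adjacent node of G if and only if the interventional graph G^𝓘 is ribbonless. -/

import Mathlib

/-
Common formalization infrastructure for loopless mixed graphs (LMGs),
m-separation, Markov equivalence, interventional graphs, ribbons,
ancestral graphs, colliders with order, and the head/tail factorization
machinery of acyclic directed mixed graphs (ADMGs), following
"Distributional Invariances and Interventional Markov Equivalence
for Mixed Graph Models" (Solus).
-/

open Relation

/-- An endpoint mark of an edge in a mixed graph: either a tail or an arrowhead. -/
inductive Mark : Type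
  | tail : Mark
  | arrow : Mark
  deriving DecidableEq

/-- A mixed graph on a vertex type `V`: `edge a b m₁ m₂` means there is an edge
between `a` and `b` carrying mark `m₁` at `a` and mark `m₂` at `b`.
Undirected edges are `(tail, tail)`, directed `a → b` is `(tail, arrow)`,
and bidirected is `(arrow, arrow)`. -/
structure MixedGraph (V : Type) : Type where
  edge : V → V → Mark → Mark → Prop

namespace MixedGraph

variable {V : Type}

/-- A loopless mixed graph: edges are symmetric (with endpoint marks swapped) and no loops. -/
def IsLMG (G : MixedGraph V) : Prop :=
  (∀ a b m₁ m₂, G.edge a b m₁ m₂ → G.edge b a m₂ m₁) ∧ ∀ a m₁ m₂, ¬ G.edge a a m₁ m₂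

/-- Two vertices are adjacent if there is some edge between them. -/
def adj (G : MixedGraph V) (a b : V) : Prop := ∃ m₁ m₂, G.edge a b m₁ m₂

/-- A simple mixed graph: at most one edge between any two nodes. -/
def Simple (G : MixedGraph V) : Prop :=
  ∀ a b m₁ m₂ n₁ n₂, G.edge a b m₁ m₂ → G.edge a b n₁ n₂ → m₁ = n₁ ∧ m₂ = n₂

/-- A directed edge `a → b`. -/
def dirEdge (G : MixedGraph V) (a b : V) : Prop := G.edge a b Mark.tail Mark.arrow

/-- A bidirected edge `a ↔ b`. -/
def bidirEdge (G : MixedGraph V) (a b : V) : Prop := G.edge a b Mark.arrow Mark.arrow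

/-- An undirected edge `a − b`. -/
def undirEdge (G : MixedGraph V) (a b : V) : Prop := G.edge a b Mark.tail Mark.tail

/-- `a` is an ancestor of `b` (reflexively: there is a directed path, possibly trivial). -/
def ancestor (G : MixedGraph V) (a b : V) : Prop := ReflTransGen G.dirEdge a b

/-- A node is selection adjacent when it is an endpoint of an undirected edge. -/
def selectionAdjacent (G : MixedGraph V) (a : V) : Prop := ∃ b, G.undirEdge a b ∨ G.undirEdge b a

/-- An ancestral graph: an LMG with no directed cycles, no bidirected edge with a
(nontrivial) directed path between its endpoints, and no arrowhead pointing into a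
selection adjacent node. -/
def IsAncestral (G : MixedGraph V) : Prop :=
  G.IsLMG ∧ (∀ a, ¬ TransGen G.dirEdge a a) ∧
    (∀ a b, G.bidirEdge a b → ¬ TransGen G.dirEdge a b ∧ ¬ TransGen G.dirEdge b a) ∧
    ∀ a, G.selectionAdjacent a → ∀ b m, ¬ G.edge b a m Mark.arrow

/-- An acyclic directed mixed graph: only directed and bidirected edges, no directed cycles. -/
def IsADMG (G : MixedGraph V) : Prop :=
  G.IsLMG ∧ (∀ a b m₁ m₂, G.edge a b m₁ m₂ → ¬ (m₁ = Mark.tail ∧ m₂ = Mark.tail)) ∧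
    ∀ a, ¬ TransGen G.dirEdge a a

/-- A directed acyclic graph: only directed edges, and no directed cycles. -/
def IsDAG (G : MixedGraph V) : Prop :=
  G.IsLMG ∧
    (∀ a b m₁ m₂, G.edge a b m₁ m₂ →
      (m₁ = Mark.tail ∧ m₂ = Mark.arrow) ∨ (m₁ = Mark.arrow ∧ m₂ = Mark.tail)) ∧
    ∀ a, ¬ TransGen G.dirEdge a a

/-- A directed ancestral graph: an ancestral graph with no undirected edges. -/
def IsDirectedAncestral (G : MixedGraph V) : Prop := G.IsAncestral ∧ ∀ a b, ¬ G.undirEdge a b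

/-- A walk in a mixed graph `G`, recording at each step the pair of endpoint marks used. -/
structure MWalk (G : MixedGraph V) : Type where
  len : ℕ
  vtx : ℕ → V
  mk₁ : ℕ → Mark
  mk₂ : ℕ → Mark
  isEdge : ∀ i, i < len → G.edge (vtx i) (vtx (i + 1)) (mk₁ i) (mk₂ i)

namespace MWalk

variable {G : MixedGraph V}

/-- The interior vertex at position `i` is a collider on the walk. -/
def colliderAt (w : MWalk G) (i : ℕ) : Prop :=
  0 < i ∧ i < w.len ∧ w.mk₂ (i - 1) = Mark.arrow ∧ w.mk₁ i = Mark.arrow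

/-- The walk is a path: all of its vertices are pairwise distinct. -/
def IsPath (w : MWalk G) : Prop :=
  ∀ i j, i ≤ w.len → j ≤ w.len → w.vtx i = w.vtx j → i = j

/-- The walk is m-connecting given `C`: all colliders are in `C` or ancestors of `C`,
all non-collider vertices are outside of `C`. -/
def mConnecting (w : MWalk G) (C : Set V) : Prop :=
  (∀ i, w.colliderAt i → ∃ c ∈ C, G.ancestor (w.vtx i) c) ∧
    ∀ i, i ≤ w.len → ¬ w.colliderAt i → w.vtx i ∉ C

end MWalk

/-- There is an m-connecting path between `a` and `b` given `C`. -/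
def mConnected (G : MixedGraph V) (a b : V) (C : Set V) : Prop :=
  ∃ w : MWalk G, w.IsPath ∧ w.vtx 0 = a ∧ w.vtx w.len = b ∧ w.mConnecting C

/-- `C` m-separates `A` and `B` in `G`. -/
def mSep (G : MixedGraph V) (A B C : Set V) : Prop := ∀ a ∈ A, ∀ b ∈ B, ¬ G.mConnected a b C

/-- The (formal) independence model `J(G)`: triples `⟨A,B∣C⟩` with `A,B` disjoint
and m-separated given `C`. -/
def indep (G : MixedGraph V) (A B C : Set V) : Prop := Disjoint A B ∧ G.mSep A B C

/-- Markov equivalence: equal independence models. -/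
def MarkovEquiv (G H : MixedGraph V) : Prop := ∀ A B C : Set V, G.indep A B C ↔ H.indep A B C

/-- The result of adding a single edge (with marks `m₁, m₂`) between `a` and `b`. -/
def addEdge (G : MixedGraph V) (a b : V) (m₁ m₂ : Mark) : MixedGraph V where
  edge x y n₁ n₂ := G.edge x y n₁ n₂ ∨ (x = a ∧ y = b ∧ n₁ = m₁ ∧ n₂ = m₂) ∨
    (x = b ∧ y = a ∧ n₁ = m₂ ∧ n₂ = m₁)

/-- A mixed graph is maximal if adding any edge between nonadjacent vertices changes
its independence model. -/
def IsMaximal (G : MixedGraph V) : Prop :=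
  ∀ a b, a ≠ b → ¬ G.adj a b → ∀ m₁ m₂, ¬ MarkovEquiv (G.addEdge a b m₁ m₂) G

/-- `G` is an (edge-)subgraph of `K` on the same vertex set. -/
def Subgraph (G K : MixedGraph V) : Prop := ∀ a b m₁ m₂, G.edge a b m₁ m₂ → K.edge a b m₁ m₂

/-- `K` is the maximal ancestral graph extension of the ancestral graph `G`:
a Markov equivalent maximal ancestral supergraph. -/
def IsMAGExtension (G K : MixedGraph V) : Prop :=
  Subgraph G K ∧ K.IsAncestral ∧ MarkovEquiv G K ∧ K.IsMaximal

/-- `G` contains a ribbon: a collider path `⟨i,j,k⟩` with no endpoint-identical edge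
between `i` and `k` such that `j` or a descendant of `j` is selection adjacent
or lies on a directed cycle. -/
def hasRibbon (G : MixedGraph V) : Prop :=
  ∃ i j k m₁ m₂, i ≠ k ∧ G.edge i j m₁ Mark.arrow ∧ G.edge j k Mark.arrow m₂ ∧
    ¬ G.edge i k m₁ m₂ ∧ ∃ d, G.ancestor j d ∧ (G.selectionAdjacent d ∨ TransGen G.dirEdge d d)

/-- Ribbonless graph. -/
def Ribbonless (G : MixedGraph V) : Prop := ¬ G.hasRibbon

/-- `K` is the maximal ribbonless extension of the ribbonless graph `G`. -/
def IsRGExtension (G K : MixedGraph V) : Prop :=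
  Subgraph G K ∧ K.Ribbonless ∧ MarkovEquiv G K ∧ K.IsMaximal

/-- `⟨i,j,k⟩` is a collider path (both edges have an arrowhead at `j`). -/
def isCollider (G : MixedGraph V) (i j k : V) : Prop :=
  ∃ m₁ m₂, G.edge i j m₁ Mark.arrow ∧ G.edge j k Mark.arrow m₂

/-- A v-structure: a collider whose endpoints are nonadjacent. -/
def isVStructure (G : MixedGraph V) (i j k : V) : Prop := G.isCollider i j k ∧ ¬ G.adj i k

/-- There is a discriminating path `⟨w 0, …, w m, w (m+1), w (m+2)⟩ = ⟨v₀,…,v_m,b,c⟩`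
for the triple `⟨i,j,k⟩`, all of whose intermediate triples satisfy `P`:
`v₀` and `c` are nonadjacent, `v₁,…,v_m` are parents of `c`, and the triples
`⟨v₀,v₁,v₂⟩, …, ⟨v_{m-1},v_m,b⟩` satisfy `P`. -/
def discPathFor (G : MixedGraph V) (P : V → V → V → Prop) (i j k : V) : Prop :=
  ∃ (m : ℕ) (w : ℕ → V), 1 ≤ m ∧
    ((w m = i ∧ w (m + 1) = j ∧ w (m + 2) = k) ∨ (w m = k ∧ w (m + 1) = j ∧ w (m + 2) = i)) ∧
    ¬ G.adj (w 0) (w (m + 2)) ∧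
    (∀ l, 1 ≤ l → l ≤ m → G.dirEdge (w l) (w (m + 2))) ∧
    (∀ l l', l ≤ m + 2 → l' ≤ m + 2 → w l = w l' → l = l') ∧
    ∀ l, l + 2 ≤ m + 1 → P (w l) (w (l + 1)) (w (l + 2))

/-- `⟨i,j,k⟩` is a collider with order at most `t`. Order `0` colliders are
v-structures; a collider has order at most `t+1` if it has order at most `t` or
lies at the end of a discriminating path all of whose intermediate triples are
colliders of order at most `t`. -/
def colliderOrderLE (G : MixedGraph V) : ℕ → V → V → V → Prop
  | 0, i, j, k => G.isCollider i j k ∧ ¬ G.adj i k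
  | t + 1, i, j, k =>
      colliderOrderLE G t i j k ∨
        (G.isCollider i j k ∧ G.discPathFor (colliderOrderLE G t) i j k)

/-- `⟨i,j,k⟩` is a collider with order (for some order). -/
def hasColliderWithOrder (G : MixedGraph V) (i j k : V) : Prop := ∃ t, G.colliderOrderLE t i j k

/-- `⟨i,j,k⟩` is a collider with order exactly `t`. -/
def colliderOrderEq (G : MixedGraph V) (t : ℕ) (i j k : V) : Prop :=
  G.colliderOrderLE t i j k ∧ ∀ s < t, ¬ G.colliderOrderLE s i j k

/-- `a` is anterior to `b`: there is a path from `a` to `b` consisting of undirected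
edges followed by a directed path toward `b`. -/
def anteriorTo (G : MixedGraph V) (a b : V) : Prop :=
  ∃ c, ReflTransGen G.undirEdge a c ∧ ReflTransGen G.dirEdge c b

/-- The closure of the set of selection adjacent nodes under the operation of
consecutively removing arrowheads pointing into such nodes (`i → j − k` becomes
`i − j − k`, creating the new selection adjacent node `i`). -/
inductive selClosure (G : MixedGraph V) : V → Prop
  | base (a b : V) : G.undirEdge a b → selClosure G a
  | base' (a b : V) : G.undirEdge b a → selClosure G a
  | step (a b : V) : G.dirEdge a b → selClosure G b → selClosure G a

/-- The anterior graph `G*` of `G`: consecutively remove all arrowheads pointing into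
nodes adjacent to an undirected edge. -/
def anteriorGraph (G : MixedGraph V) : MixedGraph V where
  edge a b m₁ m₂ := ∃ n₁ n₂, G.edge a b n₁ n₂ ∧
    ((selClosure G a ∧ m₁ = Mark.tail) ∨ (¬ selClosure G a ∧ m₁ = n₁)) ∧
    ((selClosure G b ∧ m₂ = Mark.tail) ∨ (¬ selClosure G b ∧ m₂ = n₂))

/-- The set of parents of `i`. -/
def parentsSet (G : MixedGraph V) (i : V) : Set V := {a | G.dirEdge a i}

/-- The set of spouses of `i`. -/
def spousesSet (G : MixedGraph V) (i : V) : Set V := {a | G.bidirEdge i a}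

/-- The set of ancestors of a set `S` (including `S` itself). -/
def ancSet (G : MixedGraph V) (S : Set V) : Set V := {a | ∃ s ∈ S, G.ancestor a s}

/-- A set is ancestrally closed when it equals its set of ancestors. -/
def AncestrallyClosed (G : MixedGraph V) (A : Set V) : Prop := A = G.ancSet A

/-- The district of `i` in the induced subgraph on `A`: the connected component of `i`
under bidirected edges within `A`. -/
def districtIn (G : MixedGraph V) (A : Set V) (i : V) : Set V :=
  {j | j ∈ A ∧ ReflTransGen (fun x y => x ∈ A ∧ y ∈ A ∧ G.bidirEdge x y) i j}

/-- Two vertices lie in a common district of `G`. -/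
def sameDistrict (G : MixedGraph V) (a b : V) : Prop :=
  ∃ d, a ∈ G.districtIn Set.univ d ∧ b ∈ G.districtIn Set.univ d

/-- The barren subset of `A`: those `x ∈ A` with no proper descendants inside `A`. -/
def barren (G : MixedGraph V) (A : Set V) : Set V :=
  {x | x ∈ A ∧ ∀ y ∈ A, G.ancestor x y → y = x}

/-- The head-extraction step `Φ_G(A)`. -/
def headsStep (G : MixedGraph V) (A : Set V) : Set (Set V) :=
  {H | H.Nonempty ∧ H = ⋂ i ∈ H, G.barren (G.ancSet (G.districtIn A i))}

/-- The residual step `Ψ_G(A)`. -/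
def psi (G : MixedGraph V) (A : Set V) : Set V := A \ ⋃ H ∈ G.headsStep A, H

/-- The partition `[A]_G` of `A` into heads. -/
def heads (G : MixedGraph V) (A : Set V) : Set (Set V) :=
  {H | ∃ n : ℕ, H ∈ G.headsStep ((G.psi)^[n] A)}

/-- `dis_{an(H)}(H)`: the union of the districts of the elements of `H` in the induced
subgraph on the ancestors of `H`. -/
def headDistrict (G : MixedGraph V) (H : Set V) : Set V :=
  ⋃ i ∈ H, G.districtIn (G.ancSet H) i

/-- The tail of a head `H`: `(dis_{an(H)}(H) \ H) ∪ pa_G(dis_{an(H)}(H))`. -/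
def tailOf (G : MixedGraph V) (H : Set V) : Set V :=
  (G.headDistrict H \ H) ∪ {a | ∃ s ∈ G.headDistrict H, G.dirEdge a s}

end MixedGraph

/-- The index set `W_𝓘` of intervention nodes: (occurrences of) nonempty targets. -/
abbrev InterventionIndex {V ι : Type} (targets : ι → Set V) : Type :=
  {k : ι // (targets k).Nonempty}

/-- The interventional graph `G^𝓘`: add a source node `ω_I` for each nonempty target
`I ∈ 𝓘` together with the edges `ω_I → i` for all `i ∈ I`. -/
def interventionGraph {V ι : Type} (G : MixedGraph V) (targets : ι → Set V) :
    MixedGraph (V ⊕ InterventionIndex targets) where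
  edge a b m₁ m₂ :=
    match a, b with
    | Sum.inl a, Sum.inl b => G.edge a b m₁ m₂
    | Sum.inr k, Sum.inl b => b ∈ targets k.1 ∧ m₁ = Mark.tail ∧ m₂ = Mark.arrow
    | Sum.inl a, Sum.inr k => a ∈ targets k.1 ∧ m₁ = Mark.arrow ∧ m₂ = Mark.tail
    | Sum.inr _, Sum.inr _ => False

/-- The multiset of targets doubly-intervenes on `i`: two distinct elements of the
multiset both contain `i`. -/
def doublyIntervenes {V ι : Type} (targets : ι → Set V) (i : V) : Prop :=
  ∃ k k' : ι, k ≠ k' ∧ i ∈ targets k ∧ i ∈ targets k'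

/-- `𝓘`-Markov equivalence: the interventional graphs have the same independence models. -/
def IMarkovEquiv {V ι : Type} (G H : MixedGraph V) (targets : ι → Set V) : Prop :=
  MixedGraph.MarkovEquiv (interventionGraph G targets) (interventionGraph H targets)

/-- An `𝓘`-collider with order: a collider with order in `G^𝓘` that is not a collider
with order in `G`. -/
def IColliderWithOrder {V ι : Type} (G : MixedGraph V) (targets : ι → Set V)
    (i j k : V ⊕ InterventionIndex targets) : Prop :=
  (interventionGraph G targets).hasColliderWithOrder i j k ∧
    ¬ ∃ i' j' k' : V, i = Sum.inl i' ∧ j = Sum.inl j' ∧ k = Sum.inl k' ∧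
      G.hasColliderWithOrder i' j' k'

/-- An `𝓘`-v-structure: a v-structure of `G^𝓘` with an endpoint in `W_𝓘`. -/
def IVStructure {V ι : Type} (G : MixedGraph V) (targets : ι → Set V)
    (i j k : V ⊕ InterventionIndex targets) : Prop :=
  (interventionGraph G targets).isVStructure i j k ∧
    ((∃ κ, i = Sum.inr κ) ∨ (∃ κ, k = Sum.inr κ))

/-- The induced subgraph of a graph on `[p] ∪ W_𝓘` on the observed vertex set `[p]`. -/
def observedPart {V ι : Type} {targets : ι → Set V}
    (K : MixedGraph (V ⊕ InterventionIndex targets)) : MixedGraph V where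
  edge a b m₁ m₂ := K.edge (Sum.inl a) (Sum.inl b) m₁ m₂

/-!
Intervention nodes are sources, so `G^𝓘` is acyclic when `G` is, and the descendant `d` in a
ribbon `⟨x, y, z⟩` of `G^𝓘` must be a selection adjacent node of `G`. In an ancestral graph such a
node has no proper ancestors and receives arrowheads only from intervention nodes; hence `y = d`
and `x`, `z` are two distinct intervention nodes targeting it.
-/

open MixedGraph

section InterventionGraph

variable {V ι : Type} {G : MixedGraph V} {targets : ι → Set V}

theorem MixedGraph.IsAncestral.eq_of_ancestor_of_selectionAdjacent (hG : G.IsAncestral)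
    {a d : V} (hd : G.selectionAdjacent d) (h : G.ancestor a d) : a = d := by
  rcases h.cases_tail with rfl | ⟨c, -, hcd⟩
  · rfl
  · exact absurd hcd (hG.2.2.2 d hd c Mark.tail)

theorem MixedGraph.IsLMG.interventionGraph (hG : G.IsLMG) :
    (interventionGraph G targets).IsLMG := by
  refine ⟨?_, ?_⟩
  · rintro (a | κ) (b | κ') m₁ m₂ h
    · exact hG.1 a b m₁ m₂ h
    · exact ⟨h.1, h.2.2, h.2.1⟩
    · exact ⟨h.1, h.2.2, h.2.1⟩
    · exact h
  · rintro (a | κ) m₁ m₂ h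
    · exact hG.2 a m₁ m₂ h
    · exact h

theorem interventionGraph_not_edge_arrow_inr (x : V ⊕ InterventionIndex targets)
    (κ : InterventionIndex targets) (m : Mark) :
    ¬ (interventionGraph G targets).edge x (Sum.inr κ) m Mark.arrow := by
  rcases x with a | κ'
  · rintro ⟨-, -, h⟩
    cases h
  · exact id

theorem interventionGraph_ancestor_inl {a : V} {x : V ⊕ InterventionIndex targets}
    (h : (interventionGraph G targets).ancestor (Sum.inl a) x) :
    ∃ b, x = Sum.inl b ∧ G.ancestor a b := by
  induction h with
  | refl => exact ⟨a, rfl, .refl⟩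
  | @tail y z _ hyz ih =>
    obtain ⟨b, rfl, hab⟩ := ih
    rcases z with c | κ
    · exact ⟨c, rfl, hab.tail hyz⟩
    · exact absurd hyz (interventionGraph_not_edge_arrow_inr _ κ Mark.tail)

theorem interventionGraph_not_transGen_dirEdge_self (hG : ∀ a, ¬ TransGen G.dirEdge a a)
    (x : V ⊕ InterventionIndex targets) :
    ¬ TransGen (interventionGraph G targets).dirEdge x x := by
  intro h
  obtain ⟨y, hxy, hyx⟩ := TransGen.tail'_iff.1 h
  rcases x with a | κ
  · obtain ⟨b, rfl, hab⟩ := interventionGraph_ancestor_inl hxy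
    exact hG a (TransGen.tail' hab hyx)
  · exact interventionGraph_not_edge_arrow_inr y κ _ hyx

theorem interventionGraph_selectionAdjacent_iff {x : V ⊕ InterventionIndex targets} :
    (interventionGraph G targets).selectionAdjacent x ↔
      ∃ a, x = Sum.inl a ∧ G.selectionAdjacent a := by
  rcases x with a | κ <;>
    simp [selectionAdjacent, undirEdge, interventionGraph, Sum.exists]

theorem MixedGraph.IsAncestral.eq_inr_of_interventionGraph_edge_arrow (hG : G.IsAncestral)
    {a : V} (ha : G.selectionAdjacent a) {x : V ⊕ InterventionIndex targets} {m : Mark}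
    (h : (interventionGraph G targets).edge x (Sum.inl a) m Mark.arrow) :
    ∃ κ : InterventionIndex targets, x = Sum.inr κ ∧ a ∈ targets κ.1 := by
  rcases x with b | κ
  · exact absurd h (hG.2.2.2 a ha b m)
  · exact ⟨κ, rfl, h.1⟩

theorem MixedGraph.IsAncestral.exists_doublyIntervenes_of_hasRibbon (hG : G.IsAncestral)
    (h : (interventionGraph G targets).hasRibbon) :
    ∃ a, G.selectionAdjacent a ∧ doublyIntervenes targets a := by
  obtain ⟨x, y, z, m₁, m₂, hxz, hxy, hyz, -, d, hyd, hd⟩ := h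
  obtain ⟨a, rfl, ha⟩ := interventionGraph_selectionAdjacent_iff.1
    (hd.resolve_right (interventionGraph_not_transGen_dirEdge_self hG.2.1 d))
  obtain ⟨b, rfl⟩ : ∃ b, y = Sum.inl b := by
    rcases y with b | κ
    · exact ⟨b, rfl⟩
    · exact absurd hxy (interventionGraph_not_edge_arrow_inr x κ m₁)
  obtain ⟨a', ha', hba⟩ := interventionGraph_ancestor_inl hyd
  cases Sum.inl.inj ha'
  obtain rfl := hG.eq_of_ancestor_of_selectionAdjacent ha hba
  obtain ⟨κ, rfl, hκ⟩ := hG.eq_inr_of_interventionGraph_edge_arrow ha hxy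
  obtain ⟨κ', rfl, hκ'⟩ :=
    hG.eq_inr_of_interventionGraph_edge_arrow ha (hG.1.interventionGraph.1 _ _ _ _ hyz)
  exact ⟨b, ha, κ.1, κ'.1, fun h => hxz (congrArg _ (Subtype.ext h)), hκ, hκ'⟩

theorem interventionGraph_hasRibbon_of_doublyIntervenes {a : V} (ha : G.selectionAdjacent a)
    (h : doublyIntervenes targets a) : (interventionGraph G targets).hasRibbon := by
  obtain ⟨k, k', hkk', hk, hk'⟩ := h
  -- the ribbon is `ω_k → a ← ω_k'`; intervention nodes are never adjacent
  refine ⟨Sum.inr ⟨k, a, hk⟩, Sum.inl a, Sum.inr ⟨k', a, hk'⟩, .tail, .tail, ?_,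
    ⟨hk, rfl, rfl⟩, ⟨hk', rfl, rfl⟩, id, Sum.inl a, .refl,
    Or.inl (interventionGraph_selectionAdjacent_iff.2 ⟨a, rfl, ha⟩)⟩
  exact fun h => hkk' (congrArg Subtype.val (Sum.inr.inj h))

end InterventionGraph

theorem stmt1_general {p : ℕ} {ι : Type} (G : MixedGraph (Fin p))
    (hG : G.IsAncestral) (targets : ι → Set (Fin p)) :
    (∀ i, G.selectionAdjacent i → ¬ doublyIntervenes targets i) ↔
      (interventionGraph G targets).Ribbonless := by
  refine ⟨fun hno hrib => ?_, fun hrib a ha hdbl =>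
    hrib (interventionGraph_hasRibbon_of_doublyIntervenes ha hdbl)⟩
  obtain ⟨a, ha, hdbl⟩ := hG.exists_doublyIntervenes_of_hasRibbon hrib
  exact hno a ha hdbl

/-- Lemma: ribbonless interventional graphs. Let `G` be an ancestral
graph on `[p]` and `𝓘` a multiset of intervention targets. Then `𝓘` does not
doubly-intervene on any selection adjacent node of `G` if and only if the interventional
graph `G^𝓘` is ribbonless. -/
theorem stmt1 {p : ℕ} {ι : Type} [Fintype ι] (G : MixedGraph (Fin p))
    (hG : G.IsAncestral) (targets : ι → Set (Fin p)) :
    (∀ i, G.selectionAdjacent i → ¬ doublyIntervenes targets i) ↔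
      (interventionGraph G targets).Ribbonless :=
  stmt1_general G hG targets
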